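/- arXiv:2006.00152 — 2 statements merged into one kernel-verified Lean document; each statement's English description precedes it below -/
import Mathlib

section
/- Let X be an n×n real symmetric matrix and let X_SUB be the (n−1)×(n−1) principal submatrix obtained by deleting the last row and last column of X. If σ_1 ≥ σ_2 ≥ … ≥ σ_n are the eigenvalues of X and σ_{SUB,1} ≥ σ_{SUB,2} ≥ … ≥ σ_{SUB,n−1} are the eigenvalues of X_SUB, then for every j ∈ {1,…,n−1} one has σ_j ≥ σ_{SUB,j} ≥ σ_{j+1}. -/
/-! Courant–Fischer by dimension counting. The eigenvectors of `X` with eigenvalue `≤ σ_j` span a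
subspace of dimension `≥ n - j + 1`, and the zero-extensions of the eigenvectors of `X_SUB` with
eigenvalue `≥ ν_j` one of dimension `≥ j`; so they share a nonzero vector `x`, and
`ν_j ‖x‖² ≤ ⟪x, X x⟫ ≤ σ_j ‖x‖²`. For `ν_j ≥ σ_{j+1}` the same argument runs in `ℝⁿ⁻¹`, with the
preimage under zero-extension of the span of the eigenvectors of `X` with eigenvalue `≥ σ_{j+1}`,
which has dimension `≥ j`. -/

open Matrix Module Submodule Function Finset
open scoped RealInnerProductSpace

section MinMax

variable {K V : Type*} [DivisionRing K] [AddCommGroup V] [Module K V] [FiniteDimensional K V]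

theorem Submodule.exists_mem_inf_ne_zero_of_finrank_lt_add {U W : Submodule K V}
    (h : finrank K V < finrank K U + finrank K W) : ∃ x ∈ U ⊓ W, x ≠ 0 := by
  by_contra! hUW
  have : Disjoint U W := disjoint_iff.2 (eq_bot_iff.2 fun x hx => (mem_bot K).2 (hUW x hx))
  exact (finrank_add_finrank_le_of_disjoint this).not_gt h

theorem Submodule.finrank_add_le_finrank_comap_add {V' : Type*} [AddCommGroup V'] [Module K V']
    [FiniteDimensional K V'] {L : V' →ₗ[K] V} (hL : Injective L) (W : Submodule K V) :
    finrank K W + finrank K V' ≤ finrank K (W.comap L) + finrank K V := by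
  have hcomap : finrank K (W.comap L) = finrank K ↥(LinearMap.range L ⊓ W) := by
    rw [← map_comap_eq]
    exact (equivMapOfInjective L hL _).finrank_eq
  have hrange := LinearMap.finrank_range_of_inj hL
  have hsup := finrank_sup_add_finrank_inf_eq (LinearMap.range L) W
  have hle := (LinearMap.range L ⊔ W).finrank_le
  omega

variable {E : Type*} [NormedAddCommGroup E] [NormedSpace ℝ E] [FiniteDimensional ℝ E]

theorem le_of_finrank_lt_add_of_bounds (q : E → ℝ) {U W : Submodule ℝ E} {c d : ℝ}
    (hdim : finrank ℝ E < finrank ℝ U + finrank ℝ W)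
    (hU : ∀ x ∈ U, c * ‖x‖ ^ 2 ≤ q x) (hW : ∀ x ∈ W, q x ≤ d * ‖x‖ ^ 2) : c ≤ d := by
  obtain ⟨x, ⟨hxU, hxW⟩, hx⟩ := exists_mem_inf_ne_zero_of_finrank_lt_add hdim
  have hpos : 0 < ‖x‖ ^ 2 := by positivity
  exact le_of_mul_le_mul_right ((hU x hxU).trans (hW x hxW)) hpos

end MinMax

namespace Matrix.IsHermitian

variable {N : Type*} [Fintype N] [DecidableEq N] {A : Matrix N N ℝ} (hA : A.IsHermitian)

def eigenvectorSpan (S : Finset N) : Submodule ℝ (EuclideanSpace ℝ N) :=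
  span ℝ (hA.eigenvectorBasis '' S)

theorem finrank_eigenvectorSpan (S : Finset N) : finrank ℝ (hA.eigenvectorSpan S) = #S := by
  have hS : Orthonormal ℝ fun i : (S : Set N) => hA.eigenvectorBasis i :=
    hA.eigenvectorBasis.orthonormal.comp _ Subtype.val_injective
  rw [eigenvectorSpan, Set.image_eq_range, finrank_span_eq_card hS.linearIndependent]
  simp

theorem repr_toEuclideanLin_apply (x : EuclideanSpace ℝ N) (i : N) :
    hA.eigenvectorBasis.repr (toEuclideanLin A x) i =
      hA.eigenvalues i * hA.eigenvectorBasis.repr x i := by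
  have hb : toEuclideanLin A (hA.eigenvectorBasis i) =
      hA.eigenvalues i • hA.eigenvectorBasis i := by
    rw [toLpLin_apply, hA.mulVec_eigenvectorBasis]; rfl
  rw [OrthonormalBasis.repr_apply_apply, ← isSymmetric_toEuclideanLin_iff.2 hA, hb,
    real_inner_smul_left, OrthonormalBasis.repr_apply_apply]

theorem inner_toEuclideanLin_self_eq_sum (x : EuclideanSpace ℝ N) :
    ⟪x, toEuclideanLin A x⟫ = ∑ i, hA.eigenvalues i * hA.eigenvectorBasis.repr x i ^ 2 := by
  rw [← hA.eigenvectorBasis.repr.inner_map_map, PiLp.inner_apply]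
  refine sum_congr rfl fun i _ => ?_
  rw [repr_toEuclideanLin_apply, RCLike.inner_apply, conj_trivial]
  ring

theorem norm_sq_eq_sum_repr (x : EuclideanSpace ℝ N) :
    ‖x‖ ^ 2 = ∑ i, hA.eigenvectorBasis.repr x i ^ 2 := by
  rw [← hA.eigenvectorBasis.repr.norm_map, EuclideanSpace.real_norm_sq_eq]

theorem repr_eq_zero_of_mem_eigenvectorSpan {S : Finset N} {x : EuclideanSpace ℝ N}
    (hx : x ∈ hA.eigenvectorSpan S) {i : N} (hi : i ∉ S) : hA.eigenvectorBasis.repr x i = 0 := by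
  rw [eigenvectorSpan, ← hA.eigenvectorBasis.coe_toBasis, Module.Basis.mem_span_image] at hx
  rw [← hA.eigenvectorBasis.coe_toBasis_repr_apply]
  exact Finsupp.notMem_support_iff.1 fun h => hi (hx h)

theorem mul_norm_sq_le_inner_of_mem_eigenvectorSpan {S : Finset N} {c : ℝ}
    (hc : ∀ i ∈ S, c ≤ hA.eigenvalues i) {x : EuclideanSpace ℝ N} (hx : x ∈ hA.eigenvectorSpan S) :
    c * ‖x‖ ^ 2 ≤ ⟪x, toEuclideanLin A x⟫ := by
  rw [hA.inner_toEuclideanLin_self_eq_sum, hA.norm_sq_eq_sum_repr, mul_sum]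
  refine sum_le_sum fun i _ => ?_
  by_cases hi : i ∈ S
  · exact mul_le_mul_of_nonneg_right (hc i hi) (sq_nonneg _)
  · simp [hA.repr_eq_zero_of_mem_eigenvectorSpan hx hi]

theorem inner_le_mul_norm_sq_of_mem_eigenvectorSpan {S : Finset N} {c : ℝ}
    (hc : ∀ i ∈ S, hA.eigenvalues i ≤ c) {x : EuclideanSpace ℝ N} (hx : x ∈ hA.eigenvectorSpan S) :
    ⟪x, toEuclideanLin A x⟫ ≤ c * ‖x‖ ^ 2 := by
  rw [hA.inner_toEuclideanLin_self_eq_sum, hA.norm_sq_eq_sum_repr, mul_sum]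
  refine sum_le_sum fun i _ => ?_
  by_cases hi : i ∈ S
  · exact mul_le_mul_of_nonneg_right (hc i hi) (sq_nonneg _)
  · simp [hA.repr_eq_zero_of_mem_eigenvectorSpan hx hi]

end Matrix.IsHermitian

section Compression

variable {𝕜 : Type*} [RCLike 𝕜] {M N : Type*} [Fintype N] [DecidableEq N]

theorem Matrix.conjTranspose_mul_mul_one_submatrix [Fintype M] (A : Matrix N N 𝕜) (f : M → N) :
    ((1 : Matrix N N 𝕜).submatrix id f)ᴴ * A * (1 : Matrix N N 𝕜).submatrix id f =
      A.submatrix f f := by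
  ext i j
  simp [mul_apply, one_apply]

variable [Fintype M] [DecidableEq M]

theorem Matrix.inner_toEuclideanLin_one_submatrix (A : Matrix N N 𝕜) (f : M → N)
    (x y : EuclideanSpace 𝕜 M) :
    inner 𝕜 (toEuclideanLin ((1 : Matrix N N 𝕜).submatrix id f) x)
      (toEuclideanLin A (toEuclideanLin ((1 : Matrix N N 𝕜).submatrix id f) y)) =
      inner 𝕜 x (toEuclideanLin (A.submatrix f f) y) := by
  rw [← LinearMap.adjoint_inner_right, ← toEuclideanLin_conjTranspose_eq_adjoint,
    ← conjTranspose_mul_mul_one_submatrix, toLpLin_mul_same, toLpLin_mul_same]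
  rfl

noncomputable def EuclideanSpace.extendByZero {f : M → N} (hf : Injective f) :
    EuclideanSpace 𝕜 M →ₗᵢ[𝕜] EuclideanSpace 𝕜 N :=
  (toEuclideanLin ((1 : Matrix N N 𝕜).submatrix id f)).isometryOfInner fun x y => by
    simpa [submatrix_one f hf] using inner_toEuclideanLin_one_submatrix 1 f x y

theorem EuclideanSpace.inner_extendByZero_toEuclideanLin {f : M → N} (hf : Injective f)
    (A : Matrix N N 𝕜) (x y : EuclideanSpace 𝕜 M) :
    inner 𝕜 (extendByZero hf x) (toEuclideanLin A (extendByZero hf y)) =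
      inner 𝕜 x (toEuclideanLin (A.submatrix f f) y) :=
  inner_toEuclideanLin_one_submatrix A f x y

end Compression

section Counting

variable {α ι : Type*} [LinearOrder α] [Fintype ι] {n : ℕ} {τ : Fin n → α} {l : ι → α}
  {e : Fin n ≃ ι}

theorem Antitone.add_one_le_card_filter_le (hτ : Antitone τ) (he : τ = l ∘ e) (k : Fin n) :
    (k : ℕ) + 1 ≤ #{i | τ k ≤ l i} := by
  have hmaps : ∀ i ∈ Iic k, e i ∈ ({i | τ k ≤ l i} : Finset ι) := fun i hi => by
    simpa [he] using hτ (mem_Iic.1 hi)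
  simpa using card_le_card_of_injOn e hmaps e.injective.injOn

theorem Antitone.sub_le_card_filter_ge (hτ : Antitone τ) (he : τ = l ∘ e) (k : Fin n) :
    n - k ≤ #{i | l i ≤ τ k} := by
  have hmaps : ∀ i ∈ Ici k, e i ∈ ({i | l i ≤ τ k} : Finset ι) := fun i hi => by
    simpa [he] using hτ (mem_Ici.1 hi)
  simpa using card_le_card_of_injOn e hmaps e.injective.injOn

end Counting

section Interlacing

variable {M N : Type*} [Fintype M] [DecidableEq M] [Fintype N] [DecidableEq N]
  {A : Matrix N N ℝ} {f : M → N} {n p : ℕ} {σ : Fin n → ℝ} {ν : Fin p → ℝ}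
  {eσ : Fin n ≃ N} {eν : Fin p ≃ M}

theorem Matrix.IsHermitian.eigenvalue_submatrix_le (hA : A.IsHermitian) (hf : Injective f)
    (hB : (A.submatrix f f).IsHermitian) (hσ : Antitone σ) (hσe : σ = hA.eigenvalues ∘ eσ)
    (hν : Antitone ν) (hνe : ν = hB.eigenvalues ∘ eν) {i : Fin n} {k : Fin p}
    (hik : (i : ℕ) ≤ k) : ν k ≤ σ i := by
  let L := EuclideanSpace.extendByZero (𝕜 := ℝ) hf
  have hU := hν.add_one_le_card_filter_le hνe k
  have hW := hσ.sub_le_card_filter_ge hσe i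
  refine le_of_finrank_lt_add_of_bounds (fun x => ⟪x, toEuclideanLin A x⟫)
    (U := (hB.eigenvectorSpan {j | ν k ≤ hB.eigenvalues j}).map L.toLinearMap)
    (W := hA.eigenvectorSpan {j | hA.eigenvalues j ≤ σ i}) ?_ ?_ ?_
  · rw [(equivMapOfInjective _ L.injective _).finrank_eq.symm, finrank_eigenvectorSpan,
      finrank_eigenvectorSpan, finrank_euclideanSpace, ← Fintype.card_congr eσ, Fintype.card_fin]
    omega
  · rintro _ ⟨y, hy, rfl⟩
    rw [LinearIsometry.coe_toLinearMap, L.norm_map]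
    refine le_of_le_of_eq ?_ (EuclideanSpace.inner_extendByZero_toEuclideanLin hf A y y).symm
    exact hB.mul_norm_sq_le_inner_of_mem_eigenvectorSpan (fun j hj => (mem_filter.1 hj).2) hy
  · exact fun x hx =>
      hA.inner_le_mul_norm_sq_of_mem_eigenvectorSpan (fun j hj => (mem_filter.1 hj).2) hx

theorem Matrix.IsHermitian.le_eigenvalue_submatrix (hA : A.IsHermitian) (hf : Injective f)
    (hB : (A.submatrix f f).IsHermitian) (hσ : Antitone σ) (hσe : σ = hA.eigenvalues ∘ eσ)
    (hν : Antitone ν) (hνe : ν = hB.eigenvalues ∘ eν) {i : Fin n} {k : Fin p}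
    (hki : (k : ℕ) + n ≤ i + p) : σ i ≤ ν k := by
  let L := EuclideanSpace.extendByZero (𝕜 := ℝ) hf
  have hW := hσ.add_one_le_card_filter_le hσe i
  have hV := hν.sub_le_card_filter_ge hνe k
  have hcomap := finrank_add_le_finrank_comap_add L.injective
    (hA.eigenvectorSpan {j | σ i ≤ hA.eigenvalues j})
  refine le_of_finrank_lt_add_of_bounds (fun y => ⟪y, toEuclideanLin (A.submatrix f f) y⟫)
    (U := (hA.eigenvectorSpan {j | σ i ≤ hA.eigenvalues j}).comap L.toLinearMap)
    (W := hB.eigenvectorSpan {j | hB.eigenvalues j ≤ ν k}) ?_ ?_ ?_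
  · rw [finrank_eigenvectorSpan, finrank_euclideanSpace, finrank_euclideanSpace,
      ← Fintype.card_congr eσ, ← Fintype.card_congr eν, Fintype.card_fin, Fintype.card_fin]
      at hcomap
    rw [finrank_eigenvectorSpan, finrank_euclideanSpace, ← Fintype.card_congr eν,
      Fintype.card_fin]
    omega
  · intro y hy
    rw [← L.norm_map, ← EuclideanSpace.inner_extendByZero_toEuclideanLin]
    exact hA.mul_norm_sq_le_inner_of_mem_eigenvectorSpan (fun j hj => (mem_filter.1 hj).2) hy
  · exact fun y hy =>
      hB.inner_le_mul_norm_sq_of_mem_eigenvectorSpan (fun j hj => (mem_filter.1 hj).2) hy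

end Interlacing

/-- Cauchy interlacing: if `X` is an `(m+1)×(m+1)` real symmetric matrix
and `Xsub` is the principal submatrix obtained by deleting the last row and column,
then the descending eigenvalues `σ` of `X` and `ν` of `Xsub` (with multiplicity)
satisfy `σ_j ≥ ν_j ≥ σ_{j+1}` for all `j`. -/
theorem stmt1 {m : ℕ} (X : Matrix (Fin (m + 1)) (Fin (m + 1)) ℝ)
    (hX : X.IsHermitian)
    (hXsub : (X.submatrix (Fin.castSucc : Fin m → Fin (m + 1)) Fin.castSucc).IsHermitian)
    (σ : Fin (m + 1) → ℝ) (ν : Fin m → ℝ)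
    (hσ : Antitone σ) (hν : Antitone ν)
    (eσ : Fin (m + 1) ≃ Fin (m + 1)) (hσe : σ = hX.eigenvalues ∘ eσ)
    (eν : Fin m ≃ Fin m) (hνe : ν = hXsub.eigenvalues ∘ eν) :
    ∀ j : Fin m, σ j.castSucc ≥ ν j ∧ ν j ≥ σ j.succ := fun j =>
  ⟨hX.eigenvalue_submatrix_le (Fin.castSucc_injective m) hXsub hσ hσe hν hνe le_rfl,
    hX.le_eigenvalue_submatrix (Fin.castSucc_injective m) hXsub hσ hσe hν hνe
      (by simp only [Fin.val_succ]; omega)⟩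
end

section
/- Let M be the p×p real symmetric arrowhead matrix with M_{11} = d, M_{1,s+1} = M_{s+1,1} = b_s, M_{s+1,s+1} = ν_s (s = 1,…,p−1), where ν_1 > ν_2 > … > ν_{p−1} and b_s ≠ 0 for all s. Then the function y ↦ d + Σ_{s=1}^{p−1} b_s²/(y − ν_s) − y is strictly decreasing on each interval (ν_s, ν_{s−1}) (with ν_0 = +∞, ν_p = −∞) and tends to +∞ and −∞ at the left and right endpoints respectively; consequently M has p distinct eigenvalues λ_1 > λ_2 > … > λ_p that strictly interlace the ν's: λ_1 > ν_1 > λ_2 > ν_2 > … > ν_{p−1} > λ_p. -/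
/-!
Away from its pole each term `b s ^ 2 / (y - ν s)` is decreasing, so the secular function is
strictly decreasing on each of the `m + 1` intervals cut out by the poles, and runs from `+∞` to
`-∞` across each of them; by the intermediate value theorem it has a zero `λ k` in the `k`-th
interval. A zero `λ` off the poles is an eigenvalue of the arrowhead matrix, with eigenvector
`(1, b s / (λ - ν s))`. These `m + 1` distinct eigenvalues exhaust the spectrum, since the
characteristic polynomial has degree `m + 1`.
-/

open Filter Topology

/-- The `(m+1)×(m+1)` real symmetric arrowhead matrix with top-left entry `d`,
first row/column entries `b s` and remaining diagonal `ν s`. -/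
noncomputable def arrowhead {m : ℕ} (d : ℝ) (b ν : Fin m → ℝ) :
    Matrix (Fin (m + 1)) (Fin (m + 1)) ℝ :=
  Matrix.of fun i j =>
    Fin.cases (Fin.cases d b j)
      (fun s => Fin.cases (b s) (fun t => if s = t then ν s else 0) j) i

open Finset
open scoped Matrix

theorem div_sub_le_div_sub {c v x y : ℝ} (hc : 0 ≤ c) (hxy : x ≤ y) (hv : v ∉ Set.Icc x y) :
    c / (y - v) ≤ c / (x - v) := by
  rcases lt_or_ge v x with hvx | hxv
  · exact div_le_div_of_nonneg_left hc (by linarith) (by linarith)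
  · have hyv : y < v := lt_of_not_ge fun hvy => hv ⟨hxv, hvy⟩
    rw [← neg_sub v y, ← neg_sub v x, div_neg, div_neg, neg_le_neg_iff]
    exact div_le_div_of_nonneg_left hc (by linarith) (by linarith)

theorem continuousAt_sum_div_sub {ι : Type*} (S : Finset ι) (c ν : ι → ℝ) {z : ℝ}
    (hz : ∀ t ∈ S, z ≠ ν t) : ContinuousAt (fun y => ∑ t ∈ S, c t / (y - ν t)) z :=
  tendsto_finsetSum S fun t ht =>
    continuousAt_const.div (continuousAt_id.sub continuousAt_const) (sub_ne_zero.2 (hz t ht))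

theorem tendsto_div_sub_nhdsGT {c : ℝ} (hc : 0 < c) (v : ℝ) :
    Tendsto (fun y => c / (y - v)) (𝓝[>] v) atTop := by
  have h : Tendsto (fun y => y - v) (𝓝[>] v) (𝓝[>] 0) := by
    have := (continuous_sub_right v).continuousWithinAt.tendsto_nhdsWithin
      (s := Set.Ioi v) (x := v) (t := Set.Ioi 0) fun y hy => sub_pos.2 hy
    rwa [sub_self] at this
  simpa only [div_eq_mul_inv, Function.comp_def] using
    (tendsto_inv_nhdsGT_zero.comp h).const_mul_atTop hc

theorem tendsto_div_sub_nhdsLT {c : ℝ} (hc : 0 < c) (v : ℝ) :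
    Tendsto (fun y => c / (y - v)) (𝓝[<] v) atBot := by
  have h : Tendsto (fun y => y - v) (𝓝[<] v) (𝓝[<] 0) := by
    have := (continuous_sub_right v).continuousWithinAt.tendsto_nhdsWithin
      (s := Set.Iio v) (x := v) (t := Set.Iio 0) fun y hy => sub_neg.2 hy
    rwa [sub_self] at this
  simpa only [div_eq_mul_inv, Function.comp_def] using
    (tendsto_inv_nhdsLT_zero.comp h).const_mul_atBot hc

section Secular

variable {ι : Type*} [Fintype ι] (d : ℝ) (b ν : ι → ℝ)

noncomputable def secular (y : ℝ) : ℝ :=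
  d + ∑ s, b s ^ 2 / (y - ν s) - y

variable {d b ν}

theorem secular_lt_secular {x y : ℝ} (hxy : x < y) (h : ∀ s, ν s ∉ Set.Icc x y) :
    secular d b ν y < secular d b ν x := by
  have hterms := sum_le_sum fun s (_ : s ∈ univ) =>
    div_sub_le_div_sub (sq_nonneg (b s)) hxy.le (h s)
  unfold secular
  linarith

theorem strictAntiOn_secular {U : Set ℝ} (hU : U.OrdConnected) (hpoles : ∀ s, ν s ∉ U) :
    StrictAntiOn (secular d b ν) U :=
  fun _ hx _ hy hxy => secular_lt_secular hxy fun s hs => hpoles s (hU.out hx hy hs)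

theorem continuousOn_secular {U : Set ℝ} (hpoles : ∀ s, ν s ∉ U) :
    ContinuousOn (secular d b ν) U := fun _ hz =>
  ((continuousAt_const.add
    (continuousAt_sum_div_sub univ _ ν fun s _ h => hpoles s (h ▸ hz))).sub
      continuousAt_id).continuousWithinAt

theorem tendsto_secular_atTop : Tendsto (secular d b ν) atTop atBot := by
  have hsum : Tendsto (fun y => ∑ s, b s ^ 2 / (y - ν s)) atTop (𝓝 0) := by
    simpa [sub_eq_add_neg] using tendsto_finsetSum univ fun s _ => tendsto_const_nhds.div_atTop
      (tendsto_atTop_add_const_right atTop (-ν s) tendsto_id)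
  unfold secular
  simpa only [sub_eq_add_neg, add_zero] using
    (tendsto_const_nhds.add hsum).add_atBot tendsto_neg_atTop_atBot

theorem tendsto_secular_atBot : Tendsto (secular d b ν) atBot atTop := by
  have hsum : Tendsto (fun y => ∑ s, b s ^ 2 / (y - ν s)) atBot (𝓝 0) := by
    simpa [sub_eq_add_neg] using tendsto_finsetSum univ fun s _ => tendsto_const_nhds.div_atBot
      (tendsto_atBot_add_const_right atBot (-ν s) tendsto_id)
  unfold secular
  simpa only [sub_eq_add_neg, add_zero] using
    (tendsto_const_nhds.add hsum).add_atTop tendsto_neg_atBot_atTop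

theorem continuousAt_secular_sub_pole (hν : Function.Injective ν) (s : ι) :
    ContinuousAt (fun y => secular d b ν y - b s ^ 2 / (y - ν s)) (ν s) := by
  classical
  have hrest : (fun y => secular d b ν y - b s ^ 2 / (y - ν s)) =
      fun y => d + ∑ t ∈ univ.erase s, b t ^ 2 / (y - ν t) - y := by
    funext y
    rw [secular, ← add_sum_erase _ _ (mem_univ s)]
    ring
  rw [hrest]
  refine (continuousAt_const.add (continuousAt_sum_div_sub _ _ ν fun t ht h => ?_)).sub
    continuousAt_id
  exact (mem_erase.1 ht).1 (hν h).symm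

theorem tendsto_secular_nhdsGT (hν : Function.Injective ν) {s : ι} (hb : b s ≠ 0) :
    Tendsto (secular d b ν) (𝓝[>] ν s) atTop :=
  ((tendsto_div_sub_nhdsGT (sq_pos_of_ne_zero hb) (ν s)).atTop_add
    ((continuousAt_secular_sub_pole (d := d) hν s).tendsto.mono_left nhdsWithin_le_nhds)).congr
    fun _ => add_sub_cancel _ _

theorem tendsto_secular_nhdsLT (hν : Function.Injective ν) {s : ι} (hb : b s ≠ 0) :
    Tendsto (secular d b ν) (𝓝[<] ν s) atBot :=
  ((tendsto_div_sub_nhdsLT (sq_pos_of_ne_zero hb) (ν s)).atBot_add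
    ((continuousAt_secular_sub_pole (d := d) hν s).tendsto.mono_left nhdsWithin_le_nhds)).congr
    fun _ => add_sub_cancel _ _

end Secular

section Gap

variable {m : ℕ} (ν : Fin m → ℝ)

/-- The open interval `(ν k, ν (k - 1))`, with `ν (-1) = +∞` and `ν m = -∞`. -/
def gap (k : Fin (m + 1)) : Set ℝ :=
  {x | ∀ s : Fin m, (s.castSucc < k → x < ν s) ∧ (k ≤ s.castSucc → ν s < x)}

variable {ν}

theorem gap_ordConnected (k : Fin (m + 1)) : (gap ν k).OrdConnected :=
  ⟨fun _ hx _ hy _ hz s =>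
    ⟨fun h => hz.2.trans_lt ((hy s).1 h), fun h => ((hx s).2 h).trans_le hz.1⟩⟩

theorem apply_notMem_gap (k : Fin (m + 1)) (s : Fin m) : ν s ∉ gap ν k := fun h => by
  rcases lt_or_ge s.castSucc k with hs | hs
  · exact lt_irrefl _ ((h s).1 hs)
  · exact lt_irrefl _ ((h s).2 hs)

theorem lt_of_mem_gap_of_lt {k l : Fin (m + 1)} {x y : ℝ} (hx : x ∈ gap ν k)
    (hy : y ∈ gap ν l) (hkl : k < l) : y < x := by
  set s : Fin m := k.castLT (hkl.trans_le (Fin.le_last l))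
  exact ((hy s).1 hkl).trans ((hx s).2 le_rfl)

theorem eventually_mem_gap_last : ∀ᶠ x in atBot, x ∈ gap ν (Fin.last m) :=
  eventually_all.2 fun s => (eventually_lt_atBot (ν s)).mono fun _ hx =>
    ⟨fun _ => hx, fun h => absurd h (Fin.castSucc_lt_last s).not_ge⟩

theorem eventually_mem_gap_zero : ∀ᶠ x in atTop, x ∈ gap ν 0 :=
  eventually_all.2 fun s => (eventually_gt_atTop (ν s)).mono fun _ hx =>
    ⟨fun h => absurd h (Fin.not_lt_zero _), fun _ => hx⟩

theorem eventually_mem_gap_castSucc (hν : StrictAnti ν) (s : Fin m) :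
    ∀ᶠ x in 𝓝[>] ν s, x ∈ gap ν s.castSucc := by
  refine eventually_all.2 fun t => ?_
  rcases lt_or_ge t s with hts | hst
  · filter_upwards [nhdsWithin_le_nhds (Iio_mem_nhds (hν hts))] with x hx
    exact ⟨fun _ => hx, fun h => absurd (Fin.castSucc_le_castSucc_iff.1 h) hts.not_ge⟩
  · filter_upwards [self_mem_nhdsWithin] with x hx
    exact ⟨fun h => absurd (Fin.castSucc_lt_castSucc_iff.1 h) hst.not_gt,
      fun _ => (hν.antitone hst).trans_lt hx⟩

theorem eventually_mem_gap_succ (hν : StrictAnti ν) (s : Fin m) :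
    ∀ᶠ x in 𝓝[<] ν s, x ∈ gap ν s.succ := by
  refine eventually_all.2 fun t => ?_
  rcases le_or_gt t s with hts | hst
  · filter_upwards [self_mem_nhdsWithin] with x hx
    exact ⟨fun _ => hx.out.trans_le (hν.antitone hts),
      fun h => absurd (Fin.succ_le_castSucc_iff.1 h) hts.not_gt⟩
  · filter_upwards [nhdsWithin_le_nhds (Ioi_mem_nhds (hν hst))] with x hx
    exact ⟨fun h => absurd (Fin.castSucc_lt_succ_iff.1 h) hst.not_ge, fun _ => hx⟩

end Gap

section Roots

variable {m : ℕ} {d : ℝ} {b ν : Fin m → ℝ}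

theorem exists_mem_gap_secular_pos (hν : StrictAnti ν) (hb : ∀ s, b s ≠ 0) (k : Fin (m + 1)) :
    ∃ x ∈ gap ν k, 0 < secular d b ν x := by
  induction k using Fin.lastCases with
  | last => exact (eventually_mem_gap_last.and (tendsto_secular_atBot.eventually_gt_atTop 0)).exists
  | cast s => exact ((eventually_mem_gap_castSucc hν s).and
      ((tendsto_secular_nhdsGT hν.injective (hb s)).eventually_gt_atTop 0)).exists

theorem exists_mem_gap_secular_neg (hν : StrictAnti ν) (hb : ∀ s, b s ≠ 0) (k : Fin (m + 1)) :
    ∃ x ∈ gap ν k, secular d b ν x < 0 := by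
  induction k using Fin.cases with
  | zero => exact (eventually_mem_gap_zero.and (tendsto_secular_atTop.eventually_lt_atBot 0)).exists
  | succ s => exact ((eventually_mem_gap_succ hν s).and
      ((tendsto_secular_nhdsLT hν.injective (hb s)).eventually_lt_atBot 0)).exists

theorem exists_mem_gap_secular_eq_zero (hν : StrictAnti ν) (hb : ∀ s, b s ≠ 0)
    (k : Fin (m + 1)) : ∃ x ∈ gap ν k, secular d b ν x = 0 := by
  obtain ⟨p, hp, hp0⟩ := exists_mem_gap_secular_pos (d := d) hν hb k
  obtain ⟨q, hq, hq0⟩ := exists_mem_gap_secular_neg (d := d) hν hb k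
  have hpoles := apply_notMem_gap (ν := ν) k
  have hpq : p < q :=
    ((strictAntiOn_secular (gap_ordConnected k) hpoles).lt_iff_gt hq hp).1 (hq0.trans hp0)
  have hIcc : Set.Icc p q ⊆ gap ν k := (gap_ordConnected k).out hp hq
  obtain ⟨z, hz, hz0⟩ := intermediate_value_Icc' hpq.le
    ((continuousOn_secular hpoles).mono hIcc) ⟨hq0.le, hp0.le⟩
  exact ⟨z, hIcc hz, hz0⟩

end Roots

theorem Matrix.mem_spectrum_of_mulVec_eq_smul {K n : Type*} [Field K] [Fintype n] [DecidableEq n]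
    {A : Matrix n n K} {μ : K} {v : n → K} (hv : v ≠ 0) (h : A *ᵥ v = μ • v) :
    μ ∈ spectrum K A := by
  rw [← Matrix.spectrum_toLin']
  exact (Module.End.hasEigenvalue_of_hasEigenvector
    ⟨Module.End.mem_eigenspace_iff.2 h, hv⟩).mem_spectrum

theorem Matrix.ncard_spectrum_le {K n : Type*} [Field K] [Fintype n] [DecidableEq n]
    (A : Matrix n n K) : (spectrum K A).ncard ≤ Fintype.card n := by
  classical
  have hroots : spectrum K A ⊆ A.charpoly.roots.toFinset := fun μ hμ => by
    rw [Finset.mem_coe, Multiset.mem_toFinset, Polynomial.mem_roots A.charpoly_monic.ne_zero]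
    exact Matrix.mem_spectrum_iff_isRoot_charpoly.1 hμ
  calc (spectrum K A).ncard ≤ (A.charpoly.roots.toFinset : Set K).ncard :=
        Set.ncard_le_ncard hroots
    _ ≤ Multiset.card A.charpoly.roots := by
      rw [Set.ncard_coe_finset]; exact Multiset.toFinset_card_le _
    _ ≤ A.charpoly.natDegree := Polynomial.card_roots' _
    _ = Fintype.card n := A.charpoly_natDegree_eq_dim

variable {m : ℕ} {d : ℝ} {b ν : Fin m → ℝ}

theorem arrowhead_mulVec_cons (a : ℝ) (w : Fin m → ℝ) :
    arrowhead d b ν *ᵥ Fin.cons a w =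
      Fin.cons (d * a + ∑ t, b t * w t) fun s => b s * a + ν s * w s := by
  ext i
  induction i using Fin.cases <;>
    simp [arrowhead, Matrix.mulVec, dotProduct, Fin.sum_univ_succ, ite_mul]

theorem mem_spectrum_arrowhead {μ : ℝ} (hpoles : ∀ s, μ ≠ ν s)
    (hμ : secular d b ν μ = 0) :
    μ ∈ spectrum ℝ (arrowhead d b ν) := by
  have hden : ∀ s, μ - ν s ≠ 0 := fun s => sub_ne_zero.2 (hpoles s)
  refine Matrix.mem_spectrum_of_mulVec_eq_smul (v := Fin.cons 1 fun s => b s / (μ - ν s))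
    (fun h => one_ne_zero (congrFun h 0)) ?_
  rw [arrowhead_mulVec_cons]
  ext i
  induction i using Fin.cases with
  | zero =>
    have hsum : ∑ t, b t * (b t / (μ - ν t)) = ∑ t, b t ^ 2 / (μ - ν t) :=
      sum_congr rfl fun t _ => by ring
    simp only [Fin.cons_zero, Pi.smul_apply, smul_eq_mul, mul_one, hsum]
    unfold secular at hμ
    linarith
  | succ s =>
    simp only [Fin.cons_succ, Pi.smul_apply, smul_eq_mul, mul_one]
    field_simp [hden s]
    ring

theorem spectrum_arrowhead_eq_range {lam : Fin (m + 1) → ℝ} (hlam : Function.Injective lam)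
    (hpoles : ∀ k s, lam k ≠ ν s) (hzero : ∀ k, secular d b ν (lam k) = 0) :
    spectrum ℝ (arrowhead d b ν) = Set.range lam := by
  have hsub : Set.range lam ⊆ spectrum ℝ (arrowhead d b ν) := by
    rintro _ ⟨k, rfl⟩
    exact mem_spectrum_arrowhead (hpoles k) (hzero k)
  refine (Set.eq_of_subset_of_ncard_le hsub ?_ (Matrix.finite_spectrum _)).symm
  rw [Set.ncard_range_of_injective hlam, Nat.card_eq_fintype_card]
  exact Matrix.ncard_spectrum_le _

/-- for the arrowhead matrix with strictly decreasing diagonal `ν` and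
nonzero couplings `b`, the secular function `y ↦ d + ∑_s b_s²/(y - ν_s) - y` is
strictly decreasing on each component interval of `ℝ \ {ν_s}`, blows up to `+∞` at
each left endpoint and to `-∞` at each right endpoint; consequently the matrix has
`m+1` distinct eigenvalues strictly interlacing the `ν`'s. -/
theorem stmt4 {m : ℕ} (d : ℝ) (b ν : Fin m → ℝ)
    (hν : StrictAnti ν) (hb : ∀ s, b s ≠ 0) :
    (∀ x y : ℝ, x < y → (∀ s, ν s ∉ Set.Icc x y) →
        (d + ∑ s, b s ^ 2 / (y - ν s) - y) < (d + ∑ s, b s ^ 2 / (x - ν s) - x)) ∧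
    (∀ s, Tendsto (fun y : ℝ => d + ∑ s, b s ^ 2 / (y - ν s) - y)
        (𝓝[>] (ν s)) atTop) ∧
    (∀ s, Tendsto (fun y : ℝ => d + ∑ s, b s ^ 2 / (y - ν s) - y)
        (𝓝[<] (ν s)) atBot) ∧
    Tendsto (fun y : ℝ => d + ∑ s, b s ^ 2 / (y - ν s) - y) atTop atBot ∧
    Tendsto (fun y : ℝ => d + ∑ s, b s ^ 2 / (y - ν s) - y) atBot atTop ∧
    ∃ lam : Fin (m + 1) → ℝ, StrictAnti lam ∧
      spectrum ℝ (arrowhead d b ν) = Set.range lam ∧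
      ∀ s : Fin m, lam s.castSucc > ν s ∧ ν s > lam s.succ := by
  refine ⟨fun _ _ hxy h => secular_lt_secular hxy h,
    fun s => tendsto_secular_nhdsGT hν.injective (hb s),
    fun s => tendsto_secular_nhdsLT hν.injective (hb s),
    tendsto_secular_atTop, tendsto_secular_atBot, ?_⟩
  choose lam hgap hzero using exists_mem_gap_secular_eq_zero (d := d) hν hb
  have hlam : StrictAnti lam := fun k l hkl => lt_of_mem_gap_of_lt (hgap k) (hgap l) hkl
  have hpoles : ∀ k s, lam k ≠ ν s := fun k s h => apply_notMem_gap k s (h ▸ hgap k)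
  exact ⟨lam, hlam, spectrum_arrowhead_eq_range hlam.injective hpoles hzero,
    fun s => ⟨(hgap _ s).2 le_rfl, (hgap _ s).1 Fin.castSucc_lt_succ⟩⟩
end
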